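/- In the single-hint model with v_t ≡ 1 for all t, there is a universal constant c > 0 (independent of T and L) such that for every horizon T ≥ 1, every L ∈ [1, T], every q ∈ [1, ∞), and every policy π, there exists an admissible (possibly random) sequence {m_t, h_t} with accuracy parameters σ_t satisfying E[|h_t − m_t|^q] ≤ σ_t^q for all t and Σ_{t=1}^T σ_t ≤ L (the σ_t not revealed to the bidder), such that Reg(π) ≥ c·(T·L)^{1/4}. -/

import Mathlib

noncomputable section

/-- Reward of bidding `b` in a first-price auction with private value `v` and
others' highest bid `m`: the bidder wins iff `b ≥ m`, paying her bid. -/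
def reward (v b m : ℝ) : ℝ := if m ≤ b then v - b else 0

/-- The oracle class `F`: nondecreasing 1-Lipschitz functions from `[0,1]` to `[0,1]`. -/
def IsOracle (a : ℝ → ℝ) : Prop :=
  MonotoneOn a (Set.Icc 0 1) ∧ LipschitzOnWith 1 a (Set.Icc 0 1) ∧
    Set.MapsTo a (Set.Icc 0 1) (Set.Icc 0 1)

/-- An environment for `T` rounds of repeated first-price auctions: a probability
space carrying the (jointly random) others' highest bids `m t` and hints `h t`,
together with deterministic private values `v t` and hint accuracies `σ t`
(in the single-hint model the `σ t` exist but are not revealed to the bidder). -/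
structure Env (T : ℕ) where
  Ω : Type
  [ms : MeasurableSpace Ω]
  μ : MeasureTheory.Measure Ω
  prob : MeasureTheory.IsProbabilityMeasure μ
  v : Fin T → ℝ
  m : Fin T → Ω → ℝ
  h : Fin T → Ω → ℝ
  σ : Fin T → ℝ
  v_mem : ∀ t, v t ∈ Set.Icc (0 : ℝ) 1
  m_mem : ∀ t ω, m t ω ∈ Set.Icc (0 : ℝ) 1
  h_mem : ∀ t ω, h t ω ∈ Set.Icc (0 : ℝ) 1
  σ_mem : ∀ t, σ t ∈ Set.Icc (0 : ℝ) 1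
  m_meas : ∀ t, Measurable (m t)
  h_meas : ∀ t, Measurable (h t)

/-- A randomized bidding policy in the single-hint model: at round `t` the bid may
depend on the private values `v_1,…,v_t`, the hints `h_1,…,h_t`, the past highest
bids `m_1,…,m_{t−1}`, and internal randomness `ω` — but NOT on the accuracies `σ`. -/
structure Policy (T : ℕ) where
  Ω : Type
  [ms : MeasurableSpace Ω]
  μ : MeasureTheory.Measure Ω
  prob : MeasureTheory.IsProbabilityMeasure μ
  bid : Fin T → (Fin T → ℝ) → (Fin T → ℝ) → (Fin T → ℝ) → Ω → ℝ
  bid_mem : ∀ t v h m ω, bid t v h m ω ∈ Set.Icc (0 : ℝ) 1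
  bid_meas : ∀ t v h m, Measurable fun ω => bid t v h m ω
  adapted : ∀ (t : Fin T) (v v' h h' m m' : Fin T → ℝ) (ω : Ω),
    (∀ s, s ≤ t → v s = v' s) → (∀ s, s ≤ t → h s = h' s) →
    (∀ s, s < t → m s = m' s) →
    bid t v h m ω = bid t v' h' m' ω

open MeasureTheory

/-- The admissibility condition `E[|h_t − m_t|^q] ≤ σ_t^q` for every round `t`. -/
def Admissible {T : ℕ} (env : Env T) (q : ℝ) : Prop :=
  letI := env.ms
  ∀ t, (∫ ω, |env.h t ω - env.m t ω| ^ q ∂env.μ) ≤ (env.σ t) ^ q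

/-- Expected cumulative reward of a policy in a given environment (expectation over
both the environment randomness and the policy's internal randomness). -/
def policyGain {T : ℕ} (π : Policy T) (env : Env T) : ℝ :=
  letI := env.ms
  letI := π.ms
  ∑ t : Fin T, ∫ ω : env.Ω × π.Ω,
    reward (env.v t)
      (π.bid t env.v (fun s => env.h s ω.1) (fun s => env.m s ω.1) ω.2)
      (env.m t ω.1) ∂(env.μ.prod π.μ)

/-- Expected cumulative reward of an oracle `a : [0,1] → [0,1]`. -/
def oracleGain {T : ℕ} (a : ℝ → ℝ) (env : Env T) : ℝ :=
  letI := env.ms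
  ∑ t : Fin T, ∫ ω, reward (env.v t) (a (env.v t)) (env.m t ω) ∂env.μ

/-- Regret of a policy: best oracle cumulative expected reward minus the policy's
cumulative expected reward. -/
def Regret {T : ℕ} (π : Policy T) (env : Env T) : ℝ :=
  (⨆ a : {a : ℝ → ℝ // IsOracle a}, oracleGain a.1 env) - policyGain π env

/-!
The hard instance makes the hint useless: it is always `0` and `σ_t = m_t`, which is admissible
for every `q`. The others bid `ρ ≈ √(L/T)/5` in the rounds where an i.i.d. Bernoulli(ρ) coin
`ξ_t` fires, capped at the first `M ≈ 17ρT` of them so that `Σ σ_t ≤ ρM ≤ L`, and `0` otherwise.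
The bid at round `t` depends on `ξ_{<t}` only, and a bid below `ρ` loses the spike while a bid
of at least `ρ` overpays in a quiet round; so the expected reward of a round is at most `1 - ρ`
unless the cap is already reached, which by Chebyshev has probability `O(1/(ρT))`. Among
constant bids, `ρ` earns `(1-ρ)T` and `0` earns at least `(1-ρ)T + (ρT - N)`, where `N` is the
number of coins that fire, and `E (ρT - N)⁺ = E|N - ρT|/2 ≳ √(Tρ(1-ρ)) ≍ (TL)^{1/4}`: the lower
bound on the first absolute moment comes from `x² ≤ a|x| + x⁴/a²` and the second and fourth
moments of `N - ρT`. Averaging over `ξ` gives one environment with regret of that order.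
-/

open Finset

namespace FirstPriceAuction

section BernoulliCube

variable {ι : Type*} (ρ : ℝ)

def bernWeight (b : Bool) : ℝ := if b then ρ else 1 - ρ

def centered (b : Bool) : ℝ := (if b then 1 else 0) - ρ

def centeredCount (A : Finset ι) (ξ : ι → Bool) : ℝ := ∑ i ∈ A, centered ρ (ξ i)

variable {ρ}

@[simp] lemma bernWeight_true : bernWeight ρ true = ρ := rfl
@[simp] lemma bernWeight_false : bernWeight ρ false = 1 - ρ := rfl
@[simp] lemma centered_true : centered ρ true = 1 - ρ := by simp [centered]
@[simp] lemma centered_false : centered ρ false = -ρ := by simp [centered]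

lemma bernWeight_nonneg (h0 : 0 ≤ ρ) (h1 : ρ ≤ 1) (b : Bool) : 0 ≤ bernWeight ρ b := by
  cases b <;> simp <;> linarith

@[simp] lemma sum_bernWeight_eq_one : ∑ b, bernWeight ρ b = 1 := by simp

lemma sum_bernWeight_mul (f : Bool → ℝ) :
    ∑ b, bernWeight ρ b * f b = (1 - ρ) * f false + ρ * f true := by
  simp [add_comm]

lemma centeredCount_insert_update [DecidableEq ι] {A : Finset ι} {j : ι} (hj : j ∉ A)
    (ξ : ι → Bool) (b : Bool) :
    centeredCount ρ (insert j A) (Function.update ξ j b)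
      = centered ρ b + centeredCount ρ A ξ := by
  rw [centeredCount, sum_insert hj, Function.update_self]
  congr 1
  exact sum_congr rfl fun i hi => by rw [Function.update_of_ne (ne_of_mem_of_not_mem hi hj)]

variable [Fintype ι] [DecidableEq ι]

variable (ρ) in
def bernExp (F : (ι → Bool) → ℝ) : ℝ := ∑ ξ, (∏ i, bernWeight ρ (ξ i)) * F ξ

@[simp] lemma bernExp_add (F G : (ι → Bool) → ℝ) :
    bernExp ρ (fun ξ => F ξ + G ξ) = bernExp ρ F + bernExp ρ G := by
  simp only [bernExp, mul_add, sum_add_distrib]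

@[simp] lemma bernExp_sub (F G : (ι → Bool) → ℝ) :
    bernExp ρ (fun ξ => F ξ - G ξ) = bernExp ρ F - bernExp ρ G := by
  simp only [bernExp, mul_sub, sum_sub_distrib]

@[simp] lemma bernExp_const_mul (c : ℝ) (F : (ι → Bool) → ℝ) :
    bernExp ρ (fun ξ => c * F ξ) = c * bernExp ρ F := by
  simp only [bernExp, mul_sum, mul_left_comm c]

@[simp] lemma bernExp_div_const (F : (ι → Bool) → ℝ) (c : ℝ) :
    bernExp ρ (fun ξ => F ξ / c) = bernExp ρ F / c := by
  simp only [bernExp, sum_div, mul_div_assoc]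

@[simp] lemma bernExp_const (c : ℝ) : bernExp ρ (fun _ : ι → Bool => c) = c := by
  rw [bernExp, ← sum_mul, ← Fintype.prod_sum]
  simp

lemma bernExp_sum {κ : Type*} [Fintype κ] (F : κ → (ι → Bool) → ℝ) :
    bernExp ρ (fun ξ => ∑ k, F k ξ) = ∑ k, bernExp ρ (F k) := by
  simp only [bernExp, mul_sum]
  exact sum_comm

lemma bernExp_mono (h0 : 0 ≤ ρ) (h1 : ρ ≤ 1) {F G : (ι → Bool) → ℝ}
    (h : ∀ ξ, F ξ ≤ G ξ) :
    bernExp ρ F ≤ bernExp ρ G :=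
  sum_le_sum fun ξ _ =>
    mul_le_mul_of_nonneg_left (h ξ) (prod_nonneg fun _ _ => bernWeight_nonneg h0 h1 _)

lemma exists_bernExp_le (h0 : 0 ≤ ρ) (h1 : ρ ≤ 1) (F : (ι → Bool) → ℝ) :
    ∃ ξ, bernExp ρ F ≤ F ξ := by
  obtain ⟨ξ, -, hξ⟩ := exists_max_image univ F univ_nonempty
  exact ⟨ξ, (bernExp_mono h0 h1 fun η => hξ η (mem_univ η)).trans (bernExp_const _).le⟩

lemma bernExp_ite_le_sq_div (h0 : 0 ≤ ρ) (h1 : ρ ≤ 1) {p : (ι → Bool) → Prop}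
    [DecidablePred p] {X : (ι → Bool) → ℝ} {a : ℝ} (ha : 0 < a) (hX : ∀ ξ, p ξ → a ≤ X ξ) :
    bernExp ρ (fun ξ => if p ξ then 1 else 0) ≤ bernExp ρ (fun ξ => X ξ ^ 2) / a ^ 2 := by
  rw [← bernExp_div_const]
  refine bernExp_mono h0 h1 fun ξ => ?_
  split_ifs with hp
  · exact (one_le_div (by positivity)).2 (pow_le_pow_left₀ ha.le (hX ξ hp) 2)
  · positivity

lemma bernExp_eq_sum_piSplitAt (i : ι) (F : (ι → Bool) → ℝ) :
    bernExp ρ F = ∑ b, ∑ r : {j // j ≠ i} → Bool, bernWeight ρ b *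
      ((∏ j, bernWeight ρ (r j)) * F ((Equiv.piSplitAt i fun _ => Bool).symm (b, r))) := by
  rw [bernExp, ← (Equiv.piSplitAt i fun _ => Bool).symm.sum_comp, Fintype.sum_prod_type]
  refine sum_congr rfl fun b _ => sum_congr rfl fun r _ => ?_
  have hi : (Equiv.piSplitAt i fun _ => Bool).symm (b, r) i = b := by
    simp [Equiv.piSplitAt_symm_apply]
  have hj (j : {j // j ≠ i}) : (Equiv.piSplitAt i fun _ => Bool).symm (b, r) j = r j := by
    simp [Equiv.piSplitAt_symm_apply, j.2]
  rw [Fintype.prod_eq_mul_prod_subtype_ne _ i, hi]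
  simp only [hj, mul_assoc]

lemma bernExp_eq_resample (i : ι) (F : (ι → Bool) → ℝ) :
    bernExp ρ F = (1 - ρ) * bernExp ρ (fun ξ => F (Function.update ξ i false))
      + ρ * bernExp ρ (fun ξ => F (Function.update ξ i true)) := by
  have hupd (b c : Bool) (r : {j // j ≠ i} → Bool) :
      Function.update ((Equiv.piSplitAt i fun _ => Bool).symm (b, r)) i c
        = (Equiv.piSplitAt i fun _ => Bool).symm (c, r) := by
    funext k
    by_cases hk : k = i
    · subst hk; simp [Equiv.piSplitAt_symm_apply]
    · simp [Equiv.piSplitAt_symm_apply, hk]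
  simp only [bernExp_eq_sum_piSplitAt i, hupd, ← mul_sum, ← sum_mul, sum_bernWeight_eq_one,
    one_mul, sum_bernWeight_mul]

lemma bernExp_centeredCount_insert_pow {A : Finset ι} {j : ι} (hj : j ∉ A) (k : ℕ) :
    bernExp ρ (fun ξ => centeredCount ρ (insert j A) ξ ^ k)
      = (1 - ρ) * bernExp ρ (fun ξ => (-ρ + centeredCount ρ A ξ) ^ k)
        + ρ * bernExp ρ (fun ξ => (1 - ρ + centeredCount ρ A ξ) ^ k) := by
  rw [bernExp_eq_resample j]
  simp only [centeredCount_insert_update hj, centered_false, centered_true]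

lemma bernExp_centeredCount (A : Finset ι) : bernExp ρ (centeredCount ρ A) = 0 := by
  induction A using Finset.induction_on with
  | empty =>
    rw [show centeredCount ρ (∅ : Finset ι) = fun _ => 0 from funext fun _ => sum_empty]
    exact bernExp_const 0
  | insert j A hj ih =>
    have h := bernExp_centeredCount_insert_pow (ρ := ρ) hj 1
    simp only [pow_one] at h
    rw [h]
    simp only [bernExp_add, bernExp_const, ih]
    ring

lemma bernExp_centeredCount_sq (A : Finset ι) :
    bernExp ρ (fun ξ => centeredCount ρ A ξ ^ 2) = #A * (ρ * (1 - ρ)) := by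
  induction A using Finset.induction_on with
  | empty => simp [centeredCount]
  | insert j A hj ih =>
    rw [bernExp_centeredCount_insert_pow hj, card_insert_of_notMem hj]
    simp only [add_sq, bernExp_add, bernExp_const, bernExp_const_mul, bernExp_centeredCount, ih]
    push_cast
    ring

lemma bernExp_centeredCount_pow_four_le (h0 : 0 ≤ ρ) (h1 : ρ ≤ 1) (A : Finset ι) :
    bernExp ρ (fun ξ => centeredCount ρ A ξ ^ 4)
      ≤ 3 * (#A * (ρ * (1 - ρ))) ^ 2 + #A * (ρ * (1 - ρ)) := by
  induction A using Finset.induction_on with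
  | empty => simp [centeredCount]
  | insert j A hj ih =>
    have expand (c x : ℝ) : (c + x) ^ 4 = c ^ 4 + 4 * c ^ 3 * x + 6 * c ^ 2 * x ^ 2
        + 4 * c * x ^ 3 + x ^ 4 := by ring
    rw [bernExp_centeredCount_insert_pow hj, card_insert_of_notMem hj]
    simp only [expand, bernExp_add, bernExp_const, bernExp_const_mul, bernExp_centeredCount,
      bernExp_centeredCount_sq]
    push_cast
    have hcoin : ρ * (1 - ρ) ^ 4 + (1 - ρ) * ρ ^ 4 ≤ ρ * (1 - ρ) := by
      nlinarith [mul_nonneg h0 (sub_nonneg.2 h1), mul_nonneg (mul_nonneg h0 h0) (sub_nonneg.2 h1),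
        mul_nonneg (mul_nonneg h0 (sub_nonneg.2 h1)) (sub_nonneg.2 h1)]
    nlinarith [ih, hcoin]

lemma sq_le_mul_abs_add_pow_four_div {a : ℝ} (ha : 0 < a) (x : ℝ) :
    x ^ 2 ≤ a * |x| + x ^ 4 / a ^ 2 := by
  rcases le_or_gt |x| a with h | h
  · have : x ^ 2 ≤ a * |x| := by
      rw [← sq_abs]; nlinarith [abs_nonneg x]
    linarith [show 0 ≤ x ^ 4 / a ^ 2 by positivity]
  · have : x ^ 2 ≤ x ^ 4 / a ^ 2 := by
      rw [le_div_iff₀ (by positivity)]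
      have : a ^ 2 ≤ x ^ 2 := by rw [← sq_abs x]; nlinarith
      nlinarith [sq_nonneg x]
    linarith [mul_nonneg ha.le (abs_nonneg x)]

lemma bernExp_abs_centeredCount_ge (h0 : 0 ≤ ρ) (h1 : ρ ≤ 1) (A : Finset ι)
    (hu : 1 / 8 ≤ #A * (ρ * (1 - ρ))) :
    5 / 64 * √(#A * (ρ * (1 - ρ))) ≤ bernExp ρ (fun ξ => |centeredCount ρ A ξ|) := by
  set u : ℝ := #A * (ρ * (1 - ρ))
  set E := bernExp ρ (fun ξ => |centeredCount ρ A ξ|)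
  have hs : 0 < √u := Real.sqrt_pos.2 (by linarith)
  have hsq : (4 * √u) ^ 2 = 16 * u := by rw [mul_pow, Real.sq_sqrt (by linarith)]; ring
  have hfourth :
      bernExp ρ (fun ξ => centeredCount ρ A ξ ^ 4) / (4 * √u) ^ 2 ≤ (3 * u + 1) / 16 := by
    rw [hsq, div_le_iff₀ (by linarith)]
    nlinarith [bernExp_centeredCount_pow_four_le h0 h1 A]
  have key : u ≤ 4 * √u * E + (3 * u + 1) / 16 :=
    calc u = bernExp ρ (fun ξ => centeredCount ρ A ξ ^ 2) := (bernExp_centeredCount_sq A).symm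
      _ ≤ bernExp ρ (fun ξ => 4 * √u * |centeredCount ρ A ξ|
            + centeredCount ρ A ξ ^ 4 / (4 * √u) ^ 2) :=
        bernExp_mono h0 h1 fun ξ => sq_le_mul_abs_add_pow_four_div (by positivity) _
      _ ≤ _ := by
        simp only [bernExp_add, bernExp_const_mul, bernExp_div_const]
        linarith
  have : √u * (5 / 64 * √u) ≤ √u * E := by
    nlinarith [Real.mul_self_sqrt (show 0 ≤ u by linarith)]
  exact le_of_mul_le_mul_left this hs

lemma bernExp_max_neg_centeredCount (A : Finset ι) :
    bernExp ρ (fun ξ => max (-centeredCount ρ A ξ) 0)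
      = bernExp ρ (fun ξ => |centeredCount ρ A ξ|) / 2 := by
  have h (x : ℝ) : max (-x) 0 = 1 / 2 * |x| - 1 / 2 * x := by
    rcases le_total 0 x with hx | hx
    · rw [abs_of_nonneg hx, max_eq_right (by linarith)]; ring
    · rw [abs_of_nonpos hx, max_eq_left (by linarith)]; ring
  simp only [h, bernExp_sub, bernExp_const_mul, bernExp_centeredCount]
  ring

end BernoulliCube

section Spikes

variable {T : ℕ}

def spikesBefore (ξ : Fin T → Bool) (t : Fin T) : ℕ := #{s | s < t ∧ ξ s}

def numSpikes (ξ : Fin T → Bool) : ℕ := #{s | ξ s}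

def spikeBid (ρ : ℝ) (M : ℕ) (ξ : Fin T → Bool) (t : Fin T) : ℝ :=
  if ξ t ∧ spikesBefore ξ t < M then ρ else 0

variable {ρ : ℝ} {M : ℕ}

lemma spikesBefore_congr {ξ ξ' : Fin T → Bool} {t : Fin T} (h : ∀ s < t, ξ s = ξ' s) :
    spikesBefore ξ t = spikesBefore ξ' t :=
  congrArg card (filter_congr fun s _ => and_congr_right fun hs => by rw [h s hs])

lemma spikeBid_congr {ξ ξ' : Fin T → Bool} {t : Fin T} (h : ∀ s ≤ t, ξ s = ξ' s) :
    spikeBid ρ M ξ t = spikeBid ρ M ξ' t := by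
  rw [spikeBid, spikeBid, h t le_rfl, spikesBefore_congr fun s hs => h s hs.le]

lemma spikeBid_update_of_lt (ξ : Fin T → Bool) {s t : Fin T} (hst : s < t) (b : Bool) :
    spikeBid ρ M (Function.update ξ t b) s = spikeBid ρ M ξ s :=
  spikeBid_congr fun _ hu => Function.update_of_ne (hu.trans_lt hst).ne _ _

lemma spikeBid_update_self (ξ : Fin T → Bool) (t : Fin T) (b : Bool) :
    spikeBid ρ M (Function.update ξ t b) t = if b ∧ spikesBefore ξ t < M then ρ else 0 := by
  rw [spikeBid, Function.update_self,
    spikesBefore_congr fun s hs => Function.update_of_ne hs.ne b ξ]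

lemma spikeBid_nonneg (h0 : 0 ≤ ρ) (ξ : Fin T → Bool) (t : Fin T) :
    0 ≤ spikeBid ρ M ξ t := by
  unfold spikeBid; split_ifs <;> simp [h0]

lemma spikeBid_le (h0 : 0 ≤ ρ) (ξ : Fin T → Bool) (t : Fin T) :
    spikeBid ρ M ξ t ≤ ρ := by
  unfold spikeBid; split_ifs <;> simp [h0]

lemma spikesBefore_le_numSpikes (ξ : Fin T → Bool) (t : Fin T) :
    spikesBefore ξ t ≤ numSpikes ξ :=
  card_le_card fun s hs => by
    simp only [mem_filter, mem_univ, true_and] at hs ⊢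
    exact hs.2

lemma spikesBefore_lt_of_lt {ξ : Fin T → Bool} {s t : Fin T} (hst : s < t) (hs : ξ s) :
    spikesBefore ξ s < spikesBefore ξ t := by
  refine card_lt_card ((ssubset_iff_of_subset fun u hu => ?_).2 ⟨s, by simp [hst, hs], by simp⟩)
  simp only [mem_filter, mem_univ, true_and] at hu ⊢
  exact ⟨hu.1.trans hst, hu.2⟩

lemma card_cappedSpikes_le (ξ : Fin T → Bool) : #{t | ξ t ∧ spikesBefore ξ t < M} ≤ M := by
  refine (card_le_card_of_injOn (spikesBefore ξ) (t := range M) (fun t ht => ?_)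
    fun s hs t ht hst => ?_).trans_eq (card_range M)
  · simp only [coe_filter, mem_univ, true_and] at ht
    exact mem_range.2 ht.2
  · simp only [coe_filter, mem_univ, true_and] at hs ht
    rcases lt_trichotomy s t with h | h | h
    · exact absurd hst (spikesBefore_lt_of_lt h hs.1).ne
    · exact h
    · exact absurd hst.symm (spikesBefore_lt_of_lt h ht.1).ne

lemma sum_spikeBid_le (h0 : 0 ≤ ρ) (ξ : Fin T → Bool) :
    ∑ t, spikeBid ρ M ξ t ≤ ρ * M :=
  calc ∑ t, spikeBid ρ M ξ t = ρ * #{t | ξ t ∧ spikesBefore ξ t < M} := by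
        simp [spikeBid, sum_ite, mul_comm]
    _ ≤ ρ * M := by gcongr; exact_mod_cast card_cappedSpikes_le ξ

lemma centeredCount_univ (ξ : Fin T → Bool) :
    centeredCount ρ univ ξ = numSpikes ξ - ρ * T := by
  simp [centeredCount, centered, sum_sub_distrib, numSpikes, sum_boole, mul_comm]

end Spikes

lemma abs_reward_le_one {v b : ℝ} (hv : v ∈ Set.Icc (0 : ℝ) 1)
    (hb : b ∈ Set.Icc (0 : ℝ) 1) (m : ℝ) : |reward v b m| ≤ 1 := by
  obtain ⟨hv0, hv1⟩ := hv
  obtain ⟨hb0, hb1⟩ := hb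
  unfold reward
  split_ifs <;> rw [abs_le] <;> constructor <;> linarith

lemma measurable_reward (v m : ℝ) : Measurable fun b => reward v b m :=
  Measurable.ite (measurableSet_le measurable_const measurable_id)
    (measurable_const.sub measurable_id) measurable_const

lemma isOracle_const {c : ℝ} (hc : c ∈ Set.Icc (0 : ℝ) 1) : IsOracle fun _ => c :=
  ⟨monotoneOn_const, fun _ _ _ _ => by simp, fun _ _ => hc⟩

section Regret

attribute [local instance] Env.ms Env.prob

lemma oracleGain_le {T : ℕ} (env : Env T) {a : ℝ → ℝ} (ha : IsOracle a) :
    oracleGain a env ≤ T := by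
  have hround (t : Fin T) :
      ∫ ω, reward (env.v t) (a (env.v t)) (env.m t ω) ∂env.μ ≤ 1 := by
    have := norm_integral_le_of_norm_le_const (μ := env.μ) (C := 1) <| ae_of_all _ fun ω =>
      (Real.norm_eq_abs _).trans_le <|
        abs_reward_le_one (env.v_mem t) (ha.2.2 (env.v_mem t)) (env.m t ω)
    simpa using (le_abs_self _).trans this
  calc oracleGain a env ≤ ∑ _t : Fin T, (1 : ℝ) := sum_le_sum fun t _ => hround t
    _ = T := by simp

lemma sub_le_regret {T : ℕ} (π : Policy T) (env : Env T) {a : ℝ → ℝ} (ha : IsOracle a) :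
    oracleGain a env - policyGain π env ≤ Regret π env :=
  sub_le_sub_right (le_ciSup ⟨(T : ℝ), Set.forall_mem_range.2 fun a : {a // IsOracle a} =>
    oracleGain_le env a.2⟩ ⟨a, ha⟩) _

end Regret

lemma reward_mix_le {ρ b : ℝ} (hρ : ρ ∈ Set.Icc (0 : ℝ) 1)
    (hb : b ∈ Set.Icc (0 : ℝ) 1) :
    (1 - ρ) * reward 1 b 0 + ρ * reward 1 b ρ ≤ 1 - ρ := by
  obtain ⟨hρ0, hρ1⟩ := hρ
  obtain ⟨hb0, hb1⟩ := hb
  unfold reward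
  rw [if_pos hb0]
  split_ifs <;> nlinarith

lemma mul_integral_add_mul_integral_le {Ω : Type*} [MeasurableSpace Ω] {μ : Measure Ω}
    [IsProbabilityMeasure μ] {f g : Ω → ℝ} (hf : Integrable f μ) (hg : Integrable g μ)
    {a b C : ℝ} (h : ∀ ω, a * f ω + b * g ω ≤ C) :
    a * ∫ ω, f ω ∂μ + b * ∫ ω, g ω ∂μ ≤ C := by
  rw [← integral_const_mul, ← integral_const_mul,
    ← integral_add (hf.const_mul a) (hg.const_mul b)]
  calc _ ≤ ∫ _, C ∂μ :=
        integral_mono ((hf.const_mul a).add (hg.const_mul b)) (integrable_const C) h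
    _ = C := by simp

section SpikeEnvironment

attribute [local instance] Policy.ms Policy.prob Env.ms

variable {T : ℕ} {ρ : ℝ} {M : ℕ}

lemma integrable_reward_bid (π : Policy T) (t : Fin T) (v h m : Fin T → ℝ) (m₀ : ℝ) :
    Integrable (fun ω => reward 1 (π.bid t v h m ω) m₀) π.μ :=
  .of_bound ((measurable_reward 1 m₀).comp (π.bid_meas t v h m)).aestronglyMeasurable 1 <|
    ae_of_all _ fun ω => abs_reward_le_one (by norm_num) (π.bid_mem t v h m ω) m₀

variable (ρ M) in
def spikeEnv (hρ : ρ ∈ Set.Icc (0 : ℝ) 1) (ξ : Fin T → Bool) : Env T where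
  Ω := Unit
  μ := Measure.dirac ()
  prob := inferInstance
  v _ := 1
  m t _ := spikeBid ρ M ξ t
  h _ _ := 0
  σ t := spikeBid ρ M ξ t
  v_mem _ := by norm_num
  m_mem t _ := ⟨spikeBid_nonneg hρ.1 ξ t, (spikeBid_le hρ.1 ξ t).trans hρ.2⟩
  h_mem _ _ := by norm_num
  σ_mem t := ⟨spikeBid_nonneg hρ.1 ξ t, (spikeBid_le hρ.1 ξ t).trans hρ.2⟩
  m_meas _ := measurable_const
  h_meas _ := measurable_const

variable (ρ M) in
def roundGain (π : Policy T) (ξ : Fin T → Bool) (t : Fin T) : ℝ :=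
  ∫ ω, reward 1 (π.bid t (fun _ => 1) (fun _ => 0) (spikeBid ρ M ξ) ω) (spikeBid ρ M ξ t)
    ∂π.μ

lemma spikeEnv_admissible (hρ : ρ ∈ Set.Icc (0 : ℝ) 1) (ξ : Fin T → Bool) (q : ℝ) :
    Admissible (spikeEnv ρ M hρ ξ) q := fun t => by
  show ∫ _ : Unit, |0 - spikeBid ρ M ξ t| ^ q ∂Measure.dirac () ≤ spikeBid ρ M ξ t ^ q
  rw [integral_dirac, zero_sub, abs_neg, abs_of_nonneg (spikeBid_nonneg hρ.1 ξ t)]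

lemma oracleGain_spikeEnv (hρ : ρ ∈ Set.Icc (0 : ℝ) 1) (ξ : Fin T → Bool) (a : ℝ → ℝ) :
    oracleGain a (spikeEnv ρ M hρ ξ) = ∑ t, reward 1 (a 1) (spikeBid ρ M ξ t) :=
  sum_congr rfl fun t _ =>
    integral_dirac (α := Unit) (fun _ => reward 1 (a 1) (spikeBid ρ M ξ t)) ()

lemma policyGain_spikeEnv (π : Policy T) (hρ : ρ ∈ Set.Icc (0 : ℝ) 1) (ξ : Fin T → Bool) :
    policyGain π (spikeEnv ρ M hρ ξ) = ∑ t, roundGain ρ M π ξ t := by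
  refine sum_congr rfl fun t _ => ?_
  show ∫ p : Unit × π.Ω, reward 1 (π.bid t (fun _ => 1) (fun _ => 0) (spikeBid ρ M ξ) p.2)
    (spikeBid ρ M ξ t) ∂(Measure.dirac ()).prod π.μ = _
  have hmeas : Measurable fun p : Unit × π.Ω =>
      reward 1 (π.bid t (fun _ => 1) (fun _ => 0) (spikeBid ρ M ξ) p.2) (spikeBid ρ M ξ t) :=
    (measurable_reward _ _).comp ((π.bid_meas t _ _ _).comp measurable_snd)
  rw [Measure.dirac_prod, integral_map measurable_prodMk_left.aemeasurable
    hmeas.aestronglyMeasurable]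
  rfl

lemma regret_spikeEnv_ge (π : Policy T) (hρ : ρ ∈ Set.Icc (0 : ℝ) 1) (ξ : Fin T → Bool) :
    (1 - ρ) * T + max (-centeredCount ρ univ ξ) 0 - policyGain π (spikeEnv ρ M hρ ξ)
      ≤ Regret π (spikeEnv ρ M hρ ξ) := by
  have hgain_ρ : oracleGain (fun _ => ρ) (spikeEnv ρ M hρ ξ) = (1 - ρ) * T := by
    simp [oracleGain_spikeEnv, reward, spikeBid_le hρ.1]
    ring
  have hgain_0 :
      (1 - ρ) * T - centeredCount ρ univ ξ ≤ oracleGain (fun _ => 0) (spikeEnv ρ M hρ ξ) := by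
    have hround (t : Fin T) : 1 - (if ξ t then 1 else 0) ≤ reward 1 0 (spikeBid ρ M ξ t) := by
      cases hξ : ξ t
      · simp [spikeBid, hξ, reward]
      · simp only [reward, if_true]
        split_ifs <;> norm_num
    rw [oracleGain_spikeEnv, centeredCount_univ]
    refine le_of_eq_of_le ?_ (sum_le_sum fun t (_ : t ∈ univ) => hround t)
    simp [sum_sub_distrib, numSpikes, sum_boole]
    ring
  have hρ_reg := sub_le_regret π (spikeEnv ρ M hρ ξ) (isOracle_const hρ)
  have h0_reg := sub_le_regret π (spikeEnv ρ M hρ ξ) (isOracle_const (c := 0) (by norm_num))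
  rcases max_cases (-centeredCount ρ univ ξ) 0 with ⟨h, -⟩ | ⟨h, -⟩ <;> rw [h] <;> linarith

end SpikeEnvironment

section PolicyBound

attribute [local instance] Policy.ms Policy.prob

variable {T : ℕ} {ρ : ℝ} {M : ℕ}

lemma roundGain_resample_le (π : Policy T) (hρ : ρ ∈ Set.Icc (0 : ℝ) 1) (ξ : Fin T → Bool)
    (t : Fin T) :
    (1 - ρ) * roundGain ρ M π (Function.update ξ t false) t
        + ρ * roundGain ρ M π (Function.update ξ t true) t
      ≤ (1 - ρ) + ρ * (if M ≤ spikesBefore ξ t then 1 else 0) := by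
  have hbid (b : Bool) (ω : π.Ω) :
      π.bid t (fun _ => 1) (fun _ => 0) (spikeBid ρ M (Function.update ξ t b)) ω
        = π.bid t (fun _ => 1) (fun _ => 0) (spikeBid ρ M ξ) ω :=
    π.adapted t _ _ _ _ _ _ ω (fun _ _ => rfl) (fun _ _ => rfl)
      fun _ hs => spikeBid_update_of_lt ξ hs b
  have hβ := π.bid_mem t (fun _ => 1) (fun _ => 0) (spikeBid ρ M ξ)
  simp only [roundGain, hbid, spikeBid_update_self, Bool.false_eq_true, false_and, if_false,
    true_and]
  by_cases hM : spikesBefore ξ t < M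
  · rw [if_pos hM, if_neg (not_le.2 hM), mul_zero, add_zero]
    exact mul_integral_add_mul_integral_le (integrable_reward_bid ..) (integrable_reward_bid ..)
      fun ω => reward_mix_le hρ (hβ ω)
  · rw [if_neg hM, if_pos (not_lt.1 hM), mul_one]
    refine mul_integral_add_mul_integral_le (integrable_reward_bid ..) (integrable_reward_bid ..)
      fun ω => ?_
    have := abs_le.1 (abs_reward_le_one (v := 1) (by norm_num) (hβ ω) 0)
    nlinarith [hρ.1, hρ.2]

lemma bernExp_roundGain_le (π : Policy T) (hρ : ρ ∈ Set.Icc (0 : ℝ) 1) (t : Fin T) :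
    bernExp ρ (fun ξ => roundGain ρ M π ξ t)
      ≤ (1 - ρ) + ρ * bernExp ρ (fun ξ => if M ≤ spikesBefore ξ t then 1 else 0) := by
  rw [bernExp_eq_resample t, ← bernExp_const_mul, ← bernExp_const_mul, ← bernExp_add]
  calc _ ≤ bernExp ρ (fun ξ => (1 - ρ) + ρ * (if M ≤ spikesBefore ξ t then 1 else 0)) :=
        bernExp_mono hρ.1 hρ.2 fun ξ => roundGain_resample_le π hρ ξ t
    _ = _ := by simp only [bernExp_add, bernExp_const, bernExp_const_mul]

lemma bernExp_spikesBefore_ge_le (hρ : ρ ∈ Set.Icc (0 : ℝ) 1) (hρT : 0 < ρ * T)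
    (hM : 17 * (ρ * T) ≤ M) (t : Fin T) :
    bernExp ρ (fun ξ => if M ≤ spikesBefore ξ t then 1 else 0)
      ≤ (1 - ρ) / (256 * (ρ * T)) := by
  refine (bernExp_ite_le_sq_div hρ.1 hρ.2 (X := centeredCount ρ univ)
    (a := 16 * (ρ * T)) (by positivity)
    fun ξ hξ => ?_).trans_eq ?_
  · have : (M : ℝ) ≤ numSpikes ξ := by
      exact_mod_cast hξ.trans (spikesBefore_le_numSpikes ξ t)
    rw [centeredCount_univ]
    linarith
  · rw [bernExp_centeredCount_sq, card_univ, Fintype.card_fin,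
      div_eq_div_iff (by positivity) (by positivity)]
    ring

lemma bernExp_policyGain_le (π : Policy T) (hρ : ρ ∈ Set.Icc (0 : ℝ) 1) (hρT : 0 < ρ * T)
    (hM : 17 * (ρ * T) ≤ M) :
    bernExp ρ (fun ξ => policyGain π (spikeEnv ρ M hρ ξ)) ≤ (1 - ρ) * T + 1 / 256 := by
  simp only [policyGain_spikeEnv, bernExp_sum]
  calc ∑ t, bernExp ρ (fun ξ => roundGain ρ M π ξ t)
      ≤ ∑ _t : Fin T, ((1 - ρ) + ρ * ((1 - ρ) / (256 * (ρ * T)))) :=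
        sum_le_sum fun t _ => (bernExp_roundGain_le π hρ t).trans <| by
          gcongr
          · exact hρ.1
          · exact bernExp_spikesBefore_ge_le hρ hρT hM t
    _ ≤ (1 - ρ) * T + 1 / 256 := by
        have hρ0 : ρ ≠ 0 := by rintro rfl; simp at hρT
        have hT0 : (T : ℝ) ≠ 0 := by rintro h; simp [h] at hρT
        have hsmall : (T : ℝ) * (ρ * ((1 - ρ) / (256 * (ρ * T)))) = (1 - ρ) / 256 := by
          field_simp
        rw [sum_const, card_univ, Fintype.card_fin, nsmul_eq_mul, mul_add, hsmall]
        linarith [hρ.1]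

theorem exists_le_regret_spikeEnv (π : Policy T) (hρ : ρ ∈ Set.Icc (0 : ℝ) 1)
    (hM : 17 * (ρ * T) ≤ M) (hu : 1 / 8 ≤ T * (ρ * (1 - ρ))) :
    ∃ ξ, 5 / 128 * √(T * (ρ * (1 - ρ))) - 1 / 256 ≤ Regret π (spikeEnv ρ M hρ ξ) := by
  have hρT : 0 < ρ * T := by nlinarith [hρ.1, hρ.2]
  have hdev : 5 / 64 * √(T * (ρ * (1 - ρ)))
      ≤ bernExp ρ (fun ξ : Fin T → Bool => |centeredCount ρ univ ξ|) := by
    simpa using bernExp_abs_centeredCount_ge hρ.1 hρ.2 (univ : Finset (Fin T)) (by simpa using hu)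
  obtain ⟨ξ, hξ⟩ := exists_bernExp_le hρ.1 hρ.2 fun ξ => Regret π (spikeEnv ρ M hρ ξ)
  refine ⟨ξ, le_trans ?_ hξ⟩
  calc 5 / 128 * √(T * (ρ * (1 - ρ))) - 1 / 256
      ≤ (1 - ρ) * T + bernExp ρ (fun ξ : Fin T → Bool => max (-centeredCount ρ univ ξ) 0)
          - bernExp ρ (fun ξ => policyGain π (spikeEnv ρ M hρ ξ)) := by
        rw [bernExp_max_neg_centeredCount]
        linarith [bernExp_policyGain_le π hρ hρT hM]
    _ = bernExp ρ (fun ξ : Fin T → Bool => (1 - ρ) * T + max (-centeredCount ρ univ ξ) 0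
          - policyGain π (spikeEnv ρ M hρ ξ)) := by
        simp only [bernExp_sub, bernExp_add, bernExp_const]
    _ ≤ _ := bernExp_mono hρ.1 hρ.2 fun ξ => regret_spikeEnv_ge π hρ ξ

end PolicyBound

section Parameters

variable {T : ℕ} {L : ℝ}

def spikeRate (T : ℕ) (L : ℝ) : ℝ := √(T * L) / (5 * T)

lemma spikeRate_mul (hT : 1 ≤ T) : spikeRate T L * T = √(T * L) / 5 := by
  have : (T : ℝ) ≠ 0 := by positivity
  rw [spikeRate]
  field_simp

lemma spikeRate_le (hT : 1 ≤ T) (hLT : L ≤ T) : spikeRate T L ≤ 1 / 5 := by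
  have hT0 : (0 : ℝ) < T := by exact_mod_cast hT
  rw [spikeRate, div_le_iff₀ (by positivity)]
  linarith [(Real.sqrt_le_left hT0.le).2 (by nlinarith : (T : ℝ) * L ≤ T ^ 2)]

lemma spikeRate_mem_Icc (hT : 1 ≤ T) (hLT : L ≤ T) :
    spikeRate T L ∈ Set.Icc (0 : ℝ) 1 :=
  ⟨by unfold spikeRate; positivity, by linarith [spikeRate_le hT hLT]⟩

lemma spikeRate_mul_ceil_le (hT : 1 ≤ T) (hL : 1 ≤ L) (hLT : L ≤ T) :
    spikeRate T L * ⌈17 * (spikeRate T L * T)⌉₊ ≤ L := by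
  have hρ := spikeRate_mem_Icc hT hLT
  have hρ2T : spikeRate T L * (spikeRate T L * T) = L / 25 := by
    rw [spikeRate_mul hT, spikeRate, div_mul_div_comm, Real.mul_self_sqrt (by positivity)]
    field_simp
    norm_num
  have hM := Nat.ceil_lt_add_one
    (mul_nonneg (by norm_num : (0 : ℝ) ≤ 17) (mul_nonneg hρ.1 T.cast_nonneg))
  calc spikeRate T L * ⌈17 * (spikeRate T L * T)⌉₊
      ≤ spikeRate T L * (17 * (spikeRate T L * T) + 1) := by gcongr; exact hρ.1
    _ ≤ L := by nlinarith [spikeRate_le hT hLT]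

lemma variance_spikeRate_ge (hT : 1 ≤ T) (hLT : L ≤ T) :
    4 / 25 * √(T * L) ≤ T * (spikeRate T L * (1 - spikeRate T L)) := by
  have hρT := spikeRate_mul (L := L) hT
  have : 0 ≤ spikeRate T L * T := by rw [hρT]; positivity
  calc 4 / 25 * √(T * L) = spikeRate T L * T * (4 / 5) := by rw [hρT]; ring
    _ ≤ spikeRate T L * T * (1 - spikeRate T L) := by
        gcongr; linarith [spikeRate_le hT hLT]
    _ = _ := by ring

end Parameters

lemma rpow_one_div_four_eq_sqrt_sqrt {x : ℝ} (hx : 0 ≤ x) : x ^ ((1 : ℝ) / 4) = √√x := by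
  rw [Real.sqrt_eq_rpow, Real.sqrt_eq_rpow, ← Real.rpow_mul hx]
  norm_num

end FirstPriceAuction

open FirstPriceAuction

/-- **Theorem 2 (lower bound).** In the single-hint model with `v_t ≡ 1`, there is a
universal constant `c > 0` such that for every `T ≥ 1`, `L ∈ [1,T]`, `q ∈ [1,∞)` and
every policy `π`, there is an admissible sequence (with accuracies `σ_t` hidden from
the bidder) satisfying `E[|h_t − m_t|^q] ≤ σ_t^q` and `Σ σ_t ≤ L` on which
`Reg(π) ≥ c·(T·L)^{1/4}`. -/
theorem thm2_lower :
    ∃ c : ℝ, 0 < c ∧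
      ∀ (T : ℕ), 1 ≤ T → ∀ L q : ℝ, 1 ≤ L → L ≤ (T : ℝ) → 1 ≤ q →
        ∀ π : Policy T,
          ∃ env : Env T, env.v = (fun _ => 1) ∧ Admissible env q ∧
            (∑ t : Fin T, env.σ t) ≤ L ∧
            c * ((T : ℝ) * L) ^ ((1 : ℝ) / 4) ≤ Regret π env := by
  refine ⟨3 / 256, by norm_num, fun T hT L q hL hLT _ π => ?_⟩
  set ρ := spikeRate T L
  have hρ := spikeRate_mem_Icc hT hLT
  have hvar := variance_spikeRate_ge hT hLT
  have hTL : 1 ≤ √(T * L) :=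
    Real.one_le_sqrt.2 (one_le_mul_of_one_le_of_one_le (by exact_mod_cast hT) hL)
  obtain ⟨ξ, hξ⟩ :=
    exists_le_regret_spikeEnv π hρ (Nat.le_ceil (17 * (ρ * T))) (by linarith)
  refine ⟨spikeEnv ρ _ hρ ξ, rfl, spikeEnv_admissible hρ ξ q,
    (sum_spikeBid_le hρ.1 ξ).trans (spikeRate_mul_ceil_le hT hL hLT), ?_⟩
  have hsqrt : 2 / 5 * √√(T * L) ≤ √(T * (ρ * (1 - ρ))) := by
    rw [Real.le_sqrt (by positivity) (by linarith [Real.sqrt_nonneg (T * L)]), mul_pow,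
      Real.sq_sqrt (by positivity)]
    linarith
  rw [rpow_one_div_four_eq_sqrt_sqrt (by positivity)]
  linarith [Real.one_le_sqrt.2 hTL]
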